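/- Let d ≥ 1, H ∈ (0,1), A ∈ ℝ^{d×d}, and let (B_t)_{t∈[0,1]} be a d-dimensional fractional Brownian motion with Hurst parameter H with continuous sample paths. Let X̃_t := ∫₀^t exp((t−s)A) A B_s ds + B_t for t ∈ [0,1] (pathwise Bochner integral), let a_{ij}(t) denote the (i,j) entry of exp(tA)A, and let C₂ := max_{i,j=1,…,d} sup_{t∈[0,1]} |a_{ij}(t)|² + max_{i,j=1,…,d} sup_{t∈[0,1]} |a_{ij}(t)| + 1. Then for every u ∈ [0,1], E[ ‖X̃_u‖² ] ≤ d² · C₂ · u^{2H}, where ‖·‖ is the Euclidean norm on ℝ^d. -/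

import Mathlib

/-!
Coordinatewise `X̃ᵢ(u) = I + Bᵢ(u)` with `I = ∫₀ᵘ Σⱼ aᵢⱼ(u - s) Bⱼ(s) ds`, so
`E[X̃ᵢ(u)²] = E[I²] + 2 E[I Bᵢ(u)] + u^(2H)`. Let `M₂` and `M₁` be the two suprema in `C₂`.
Cauchy–Schwarz in `s` and Fubini give `E[I²] ≤ u ∫₀ᵘ Σⱼ aᵢⱼ(u - s)² s^(2H) ds ≤ d M₂ u^(2H)`.
Independence of the coordinates leaves only `j = i` in `E[I Bᵢ(u)] = ∫₀ᵘ aᵢᵢ(u - s) R(s, u) ds`,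
where `R(s, u) ≥ 0` is the fBM covariance; the symmetry `s ↦ u - s` gives
`∫₀ᵘ R(s, u) ds = u^(2H+1) / 2`, hence `2 E[I Bᵢ(u)] ≤ M₁ u^(2H)`. Summing over `i`,
`d (d M₂ + M₁ + 1) u^(2H) ≤ d² C₂ u^(2H)`.
-/

open MeasureTheory ProbabilityTheory Real Set
open scoped ProbabilityTheory

/-- The matrix `exp(tA) A`, whose entries are the `a_{ij}(t)` of the paper. -/
noncomputable def aEnt {d : ℕ} (A : Matrix (Fin d) (Fin d) ℝ) (t : ℝ) :
    Matrix (Fin d) (Fin d) ℝ :=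
  NormedSpace.exp (t • A) * A

/-- The centered solution `X̃_t = ∫₀ᵗ exp((t-s)A) A B_s ds + B_t` (written
coordinatewise) of the fractional Ornstein–Uhlenbeck equation `dX_t = A X_t dt + dB_t^H`. -/
noncomputable def fouCentered {Ω : Type*} {d : ℕ} (A : Matrix (Fin d) (Fin d) ℝ)
    (B : ℝ → Ω → Fin d → ℝ) (t : ℝ) (ω : Ω) (i : Fin d) : ℝ :=
  (∫ s in (0:ℝ)..t, ∑ j, aEnt A (t - s) i j * B s ω j) + B t ω i

/-- The constant `C₂ = max_{i,j} sup_{t ∈ [0,1]} |a_{ij}(t)|² +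
max_{i,j} sup_{t ∈ [0,1]} |a_{ij}(t)| + 1`. -/
noncomputable def entC2 {d : ℕ} (A : Matrix (Fin d) (Fin d) ℝ) : ℝ :=
  (⨆ p : Fin d × Fin d × Icc (0:ℝ) 1, |aEnt A (p.2.2 : ℝ) p.1 p.2.1| ^ 2) +
    (⨆ p : Fin d × Fin d × Icc (0:ℝ) 1, |aEnt A (p.2.2 : ℝ) p.1 p.2.1|) + 1

/-- A `d`-dimensional fractional Brownian motion with Hurst parameter `H` on `[0,1]`,
with continuous sample paths: every finite linear combination of coordinate values is a
centered Gaussian random variable, distinct coordinates are independent (their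
cross-covariances vanish) and each coordinate has the fBM covariance
`E[B_t^i B_s^i] = (1/2)(t^(2H) + s^(2H) - |t-s|^(2H))`. -/
def IsMultiFBM {Ω : Type*} [MeasureSpace Ω] {d : ℕ} (H : ℝ)
    (B : ℝ → Ω → Fin d → ℝ) : Prop :=
  (∀ t ∈ Icc (0:ℝ) 1, ∀ i, Measurable fun ω => B t ω i) ∧
  (∀ ω i, ContinuousOn (fun t => B t ω i) (Icc (0:ℝ) 1)) ∧
  (∀ (n : ℕ) (ts : Fin n → ℝ) (idx : Fin n → Fin d) (cs : Fin n → ℝ),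
    (∀ k, ts k ∈ Icc (0:ℝ) 1) →
    ∃ v : NNReal,
      Measure.map (fun ω => ∑ k, cs k * B (ts k) ω (idx k)) (ℙ : Measure Ω) =
        gaussianReal 0 v) ∧
  (∀ (i j : Fin d) (s t : ℝ), s ∈ Icc (0:ℝ) 1 → t ∈ Icc (0:ℝ) 1 →
    (∫ ω, B s ω i * B t ω j ∂(ℙ : Measure Ω)) =
      if i = j then (s ^ (2 * H) + t ^ (2 * H) - |t - s| ^ (2 * H)) / 2 else 0)

section ProdIntegral

variable {α β : Type*} {mα : MeasurableSpace α} {mβ : MeasurableSpace β}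
  {ν : Measure α} {μ : Measure β}

theorem integral_add_sq {f g : β → ℝ} (hf : MemLp f 2 μ) (hg : MemLp g 2 μ) :
    ∫ b, (f b + g b) ^ 2 ∂μ = ∫ b, f b ^ 2 ∂μ + 2 * ∫ b, f b * g b ∂μ + ∫ b, g b ^ 2 ∂μ := by
  have hfg : Integrable (fun b => 2 * (f b * g b)) μ := (hf.integrable_mul hg).const_mul 2
  have hf2fg : Integrable (fun b => f b ^ 2 + 2 * (f b * g b)) μ := hf.integrable_sq.add hfg
  simp_rw [add_sq, mul_assoc]
  rw [integral_add hf2fg hg.integrable_sq, integral_add hf.integrable_sq hfg, integral_const_mul]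

theorem sq_integral_le_measureReal_univ_mul_integral_sq [IsFiniteMeasure ν] {f : α → ℝ}
    (hf : MemLp f 2 ν) :
    (∫ a, f a ∂ν) ^ 2 ≤ ν.real univ * ∫ a, f a ^ 2 ∂ν := by
  rcases eq_zero_or_neZero ν with rfl | hν
  · simp
  set c := ν.real univ
  have hc : c ≠ 0 := measureReal_univ_ne_zero
  have hvar := variance_nonneg f ((ν univ)⁻¹ • ν)
  rw [variance_eq_sub (hf.smul_measure (by simp [hν.out])), integral_smul_measure,
    integral_smul_measure, sub_nonneg, ENNReal.toReal_inv, ← measureReal_def] at hvar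
  calc (∫ a, f a ∂ν) ^ 2 = c ^ 2 * (c⁻¹ • ∫ a, f a ∂ν) ^ 2 := by
        rw [smul_eq_mul]; field_simp
    _ ≤ c ^ 2 * (c⁻¹ • ∫ a, (f ^ 2) a ∂ν) := by gcongr
    _ = c * ∫ a, f a ^ 2 ∂ν := by
        rw [smul_eq_mul]; field_simp; rfl

variable [IsFiniteMeasure ν] [SFinite μ] {F : α → β → ℝ}

theorem memLp_two_uncurry_of_integral_sq_le (hF : Measurable (Function.uncurry F))
    (hFa : ∀ᵐ a ∂ν, MemLp (F a) 2 μ) {C : ℝ} (hC : ∀ᵐ a ∂ν, ∫ b, F a b ^ 2 ∂μ ≤ C) :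
    MemLp (Function.uncurry F) 2 (ν.prod μ) := by
  have hF2 : Measurable fun p : α × β => F p.1 p.2 ^ 2 := hF.pow_const 2
  refine (memLp_two_iff_integrable_sq hF.aestronglyMeasurable).2
    ((integrable_prod_iff hF2.aestronglyMeasurable).2
      ⟨hFa.mono fun a ha => ha.integrable_sq, ?_⟩)
  refine Integrable.of_bound hF2.aestronglyMeasurable.norm.integral_prod_right' C ?_
  filter_upwards [hC] with a ha
  simp only [norm_pow, Real.norm_eq_abs, sq_abs]
  rwa [abs_of_nonneg (integral_nonneg fun b => sq_nonneg (F a b))]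

theorem ae_sq_integral_le (hF : Measurable (Function.uncurry F))
    (hF2 : Integrable (fun p : α × β => F p.1 p.2 ^ 2) (ν.prod μ)) :
    ∀ᵐ b ∂μ, (∫ a, F a b ∂ν) ^ 2 ≤ ν.real univ * ∫ a, F a b ^ 2 ∂ν := by
  filter_upwards [hF2.prod_left_ae] with b hb
  exact sq_integral_le_measureReal_univ_mul_integral_sq
    ((memLp_two_iff_integrable_sq (hF.comp measurable_prodMk_right).aestronglyMeasurable).2 hb)

theorem memLp_two_integral_left (hF : Measurable (Function.uncurry F))
    (hF2 : Integrable (fun p : α × β => F p.1 p.2 ^ 2) (ν.prod μ)) :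
    MemLp (fun b => ∫ a, F a b ∂ν) 2 μ := by
  have hm : AEStronglyMeasurable (fun b => ∫ a, F a b ∂ν) μ :=
    hF.stronglyMeasurable.integral_prod_left.aestronglyMeasurable
  refine (memLp_two_iff_integrable_sq hm).2
    ((hF2.integral_prod_right.const_mul (ν.real univ)).mono' (hm.pow 2) ?_)
  filter_upwards [ae_sq_integral_le hF hF2] with b hb
  rwa [Real.norm_eq_abs, abs_of_nonneg (sq_nonneg _)]

theorem integral_sq_integral_le (hF : Measurable (Function.uncurry F))
    (hF2 : Integrable (fun p : α × β => F p.1 p.2 ^ 2) (ν.prod μ)) :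
    ∫ b, (∫ a, F a b ∂ν) ^ 2 ∂μ ≤ ν.real univ * ∫ a, ∫ b, F a b ^ 2 ∂μ ∂ν := by
  calc ∫ b, (∫ a, F a b ∂ν) ^ 2 ∂μ ≤ ∫ b, ν.real univ * ∫ a, F a b ^ 2 ∂ν ∂μ :=
        integral_mono_ae (memLp_two_integral_left hF hF2).integrable_sq
          (hF2.integral_prod_right.const_mul _) (ae_sq_integral_le hF hF2)
    _ = ν.real univ * ∫ a, ∫ b, F a b ^ 2 ∂μ ∂ν := by
        rw [integral_const_mul, integral_integral_swap (f := fun a b => F a b ^ 2) hF2]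

theorem integral_integral_mul_swap {g : β → ℝ}
    (hFg : Integrable (fun p : α × β => F p.1 p.2 * g p.2) (ν.prod μ)) :
    ∫ b, (∫ a, F a b ∂ν) * g b ∂μ = ∫ a, ∫ b, F a b * g b ∂μ ∂ν := by
  simp_rw [← integral_mul_const]
  exact (integral_integral_swap (f := fun a b => F a b * g b) hFg).symm

end ProdIntegral

theorem integral_rpow_add_rpow_sub_rpow_sub {p : ℝ} (hp : -1 < p) (u : ℝ) :
    ∫ s in (0:ℝ)..u, (s ^ p + u ^ p - (u - s) ^ p) / 2 = u * u ^ p / 2 := by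
  have hint : IntervalIntegrable (fun s : ℝ => s ^ p) volume 0 u :=
    intervalIntegral.intervalIntegrable_rpow' hp
  have hsymm : ∫ s in (0:ℝ)..u, (u - s) ^ p = ∫ s in (0:ℝ)..u, s ^ p := by
    simpa using intervalIntegral.integral_comp_sub_left (fun s : ℝ => s ^ p) u (a := 0) (b := u)
  rw [intervalIntegral.integral_div,
    intervalIntegral.integral_sub (hint.add intervalIntegrable_const)
      (by simpa using (hint.comp_sub_left u).symm),
    intervalIntegral.integral_add hint intervalIntegrable_const, hsymm]
  simp only [intervalIntegral.integral_const, sub_zero, smul_eq_mul]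
  ring

namespace IsMultiFBM

variable {Ω : Type*} [MeasureSpace Ω] {d : ℕ} {H : ℝ} {B : ℝ → Ω → Fin d → ℝ}

theorem memLp_two (hB : IsMultiFBM H B) {t : ℝ} (ht : t ∈ Icc (0:ℝ) 1) (j : Fin d) :
    MemLp (fun ω => B t ω j) 2 ℙ := by
  obtain ⟨v, hv⟩ := hB.2.2.1 1 (fun _ => t) (fun _ => j) (fun _ => 1) (fun _ => ht)
  simp only [Fin.sum_univ_one, one_mul] at hv
  have hG : MemLp id 2 (Measure.map (fun ω => B t ω j) ℙ) := hv ▸ memLp_id_gaussianReal 2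
  exact (memLp_map_measure_iff hG.1 (hB.1 t ht j).aemeasurable).1 hG

theorem integrable_mul (hB : IsMultiFBM H B) {s t : ℝ} (hs : s ∈ Icc (0:ℝ) 1)
    (ht : t ∈ Icc (0:ℝ) 1) (i j : Fin d) : Integrable (fun ω => B s ω i * B t ω j) ℙ :=
  (hB.memLp_two hs i).integrable_mul (hB.memLp_two ht j)

theorem integral_sq (hB : IsMultiFBM H B) (hH : 0 < H) {t : ℝ} (ht : t ∈ Icc (0:ℝ) 1)
    (i : Fin d) : ∫ ω, B t ω i ^ 2 = t ^ (2 * H) := by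
  have h := hB.2.2.2 i i t t ht ht
  rw [if_pos rfl, sub_self, abs_zero, zero_rpow (by positivity : 2 * H ≠ 0)] at h
  simp_rw [sq, h]
  ring

theorem memLp_two_sum_mul (hB : IsMultiFBM H B) {s : ℝ} (hs : s ∈ Icc (0:ℝ) 1)
    (c : Fin d → ℝ) : MemLp (fun ω => ∑ j, c j * B s ω j) 2 ℙ :=
  memLp_finsetSum _ fun j _ => (hB.memLp_two hs j).const_mul (c j)

theorem integral_sum_mul_mul (hB : IsMultiFBM H B) {s t : ℝ} (hs : s ∈ Icc (0:ℝ) 1)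
    (ht : t ∈ Icc (0:ℝ) 1) (c : Fin d → ℝ) (i : Fin d) :
    ∫ ω, (∑ j, c j * B s ω j) * B t ω i =
      c i * ((s ^ (2 * H) + t ^ (2 * H) - |t - s| ^ (2 * H)) / 2) := by
  simp_rw [Finset.sum_mul, mul_assoc]
  rw [integral_finsetSum _ fun j _ => (hB.integrable_mul hs ht j i).const_mul (c j)]
  simp_rw [integral_const_mul, hB.2.2.2 _ _ s t hs ht, mul_ite, mul_zero]
  simp

theorem integral_sum_mul_sq (hB : IsMultiFBM H B) (hH : 0 < H) {s : ℝ} (hs : s ∈ Icc (0:ℝ) 1)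
    (c : Fin d → ℝ) :
    ∫ ω, (∑ j, c j * B s ω j) ^ 2 = (∑ j, c j ^ 2) * s ^ (2 * H) := by
  have hsq : ∀ ω, (∑ j, c j * B s ω j) ^ 2 = ∑ k, c k * ((∑ j, c j * B s ω j) * B s ω k) := by
    intro ω
    rw [sq, Finset.mul_sum]
    exact Finset.sum_congr rfl fun k _ => by ring
  simp_rw [hsq]
  rw [integral_finsetSum (f := fun k ω => c k * ((∑ j, c j * B s ω j) * B s ω k)) _ fun k _ =>
    ((hB.memLp_two_sum_mul hs c).integrable_mul (hB.memLp_two hs k)).const_mul (c k)]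
  simp_rw [integral_const_mul, hB.integral_sum_mul_mul hs hs, sub_self, abs_zero,
    zero_rpow (by positivity : 2 * H ≠ 0), Finset.sum_mul]
  exact Finset.sum_congr rfl fun k _ => by ring

theorem measurable_uncurry_projIcc (hB : IsMultiFBM H B) (j : Fin d) :
    Measurable (Function.uncurry fun s ω => B (projIcc (0:ℝ) 1 zero_le_one s) ω j) :=
  measurable_uncurry_of_continuous_of_measurable
    (fun ω => (hB.2.1 ω j).comp_continuous (continuous_subtype_val.comp continuous_projIcc)
      fun s => (projIcc 0 1 _ s).2)
    (fun s => hB.1 _ (projIcc 0 1 _ s).2 j)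

end IsMultiFBM

attribute [local instance] Matrix.linftyOpNormedRing Matrix.linftyOpNormedAlgebra in
theorem continuous_aEnt {d : ℕ} (A : Matrix (Fin d) (Fin d) ℝ) : Continuous (aEnt A) :=
  (NormedSpace.exp_continuous.comp (continuous_id.smul continuous_const)).mul continuous_const

section EntrySup

variable {d : ℕ} (A : Matrix (Fin d) (Fin d) ℝ)

noncomputable def entSup : ℝ := ⨆ p : Fin d × Fin d × Icc (0:ℝ) 1, |aEnt A p.2.2 p.1 p.2.1|

noncomputable def entSqSup : ℝ :=
  ⨆ p : Fin d × Fin d × Icc (0:ℝ) 1, |aEnt A p.2.2 p.1 p.2.1| ^ 2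

theorem entC2_eq : entC2 A = entSqSup A + entSup A + 1 := rfl

theorem continuous_abs_aEnt_apply :
    Continuous fun p : Fin d × Fin d × Icc (0:ℝ) 1 => |aEnt A p.2.2 p.1 p.2.1| :=
  continuous_prod_of_discrete_left.2 fun i => continuous_prod_of_discrete_left.2 fun j =>
    (((continuous_apply_apply i j).comp (continuous_aEnt A)).comp continuous_subtype_val).abs

theorem abs_aEnt_le_entSup {t : ℝ} (ht : t ∈ Icc (0:ℝ) 1) (i j : Fin d) :
    |aEnt A t i j| ≤ entSup A :=
  le_ciSup (isCompact_range (continuous_abs_aEnt_apply A)).bddAbove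
    (⟨i, j, t, ht⟩ : Fin d × Fin d × Icc (0:ℝ) 1)

theorem aEnt_sq_le_entSqSup {t : ℝ} (ht : t ∈ Icc (0:ℝ) 1) (i j : Fin d) :
    aEnt A t i j ^ 2 ≤ entSqSup A := by
  rw [← sq_abs]
  exact le_ciSup (isCompact_range ((continuous_abs_aEnt_apply A).pow 2)).bddAbove
    (⟨i, j, t, ht⟩ : Fin d × Fin d × Icc (0:ℝ) 1)

theorem entSup_nonneg : 0 ≤ entSup A := Real.iSup_nonneg fun _ => abs_nonneg _

theorem entSqSup_nonneg : 0 ≤ entSqSup A := Real.iSup_nonneg fun _ => sq_nonneg _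

end EntrySup

-- `B` is read through `projIcc` so that the integrand is jointly measurable on `ℝ × Ω`;
-- on `[0, 1]` it is the integrand of `fouCentered`.
noncomputable def fouIntegrand {Ω : Type*} {d : ℕ} (A : Matrix (Fin d) (Fin d) ℝ)
    (B : ℝ → Ω → Fin d → ℝ) (u : ℝ) (i : Fin d) (s : ℝ) (ω : Ω) : ℝ :=
  ∑ j, aEnt A (u - s) i j * B (projIcc (0:ℝ) 1 zero_le_one s) ω j

section FOU

variable {Ω : Type*} {d : ℕ} {H : ℝ} {A : Matrix (Fin d) (Fin d) ℝ} {B : ℝ → Ω → Fin d → ℝ}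
  {u : ℝ}

theorem fouIntegrand_of_mem {s : ℝ} (hs : s ∈ Icc (0:ℝ) 1) (i : Fin d) (ω : Ω) :
    fouIntegrand A B u i s ω = ∑ j, aEnt A (u - s) i j * B s ω j := by
  simp [fouIntegrand, projIcc_of_mem _ hs]

theorem fouCentered_eq_setIntegral_add (hu : u ∈ Icc (0:ℝ) 1) (ω : Ω) (i : Fin d) :
    fouCentered A B u ω i = (∫ s in Ioc 0 u, fouIntegrand A B u i s ω) + B u ω i := by
  rw [fouCentered, intervalIntegral.integral_of_le hu.1]
  congr 1
  exact setIntegral_congr_fun measurableSet_Ioc fun s hs =>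
    (fouIntegrand_of_mem ⟨hs.1.le, hs.2.trans hu.2⟩ i ω).symm

variable [MeasureSpace Ω]

theorem measurable_uncurry_fouIntegrand (hB : IsMultiFBM H B) (i : Fin d) :
    Measurable (Function.uncurry (fouIntegrand A B u i)) :=
  Finset.measurable_fun_sum (f := fun j (p : ℝ × Ω) =>
      aEnt A (u - p.1) i j * B (projIcc (0:ℝ) 1 zero_le_one p.1) p.2 j) Finset.univ fun j _ =>
    ((((continuous_apply_apply i j).comp (continuous_aEnt A)).comp
      (continuous_const.sub continuous_id)).measurable.comp measurable_fst).mul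
      (hB.measurable_uncurry_projIcc j)

theorem integral_fouIntegrand_sq_le (hB : IsMultiFBM H B) (hH : 0 < H) (hu : u ≤ 1) {s : ℝ}
    (hs : s ∈ Icc (0:ℝ) u) (i : Fin d) :
    ∫ ω, fouIntegrand A B u i s ω ^ 2 ≤ d * entSqSup A * u ^ (2 * H) := by
  have hs1 : s ∈ Icc (0:ℝ) 1 := ⟨hs.1, hs.2.trans hu⟩
  simp_rw [fouIntegrand_of_mem hs1, hB.integral_sum_mul_sq hH hs1]
  have hsum : ∑ j, aEnt A (u - s) i j ^ 2 ≤ d * entSqSup A := by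
    simpa using Finset.sum_le_card_nsmul Finset.univ _ _ fun j _ =>
      aEnt_sq_le_entSqSup A ⟨sub_nonneg.2 hs.2, by linarith [hs.1]⟩ i j
  exact mul_le_mul hsum (rpow_le_rpow hs.1 hs.2 (by positivity)) (rpow_nonneg hs.1 _)
    (mul_nonneg d.cast_nonneg (entSqSup_nonneg A))

theorem integral_fouIntegrand_mul_le (hB : IsMultiFBM H B) (hH : 0 ≤ H) (hu : u ≤ 1) {s : ℝ}
    (hs : s ∈ Icc (0:ℝ) u) (i : Fin d) :
    ∫ ω, fouIntegrand A B u i s ω * B u ω i ≤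
      entSup A * ((s ^ (2 * H) + u ^ (2 * H) - (u - s) ^ (2 * H)) / 2) := by
  have hs1 : s ∈ Icc (0:ℝ) 1 := ⟨hs.1, hs.2.trans hu⟩
  have hus : 0 ≤ u - s := sub_nonneg.2 hs.2
  simp_rw [fouIntegrand_of_mem hs1, hB.integral_sum_mul_mul hs1 ⟨hs.1.trans hs.2, hu⟩,
    abs_of_nonneg hus]
  have hcov : 0 ≤ s ^ (2 * H) + u ^ (2 * H) - (u - s) ^ (2 * H) := by
    have := rpow_le_rpow hus (sub_le_self u hs.1) (by positivity : 0 ≤ 2 * H)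
    have := rpow_nonneg hs.1 (2 * H)
    linarith
  gcongr
  exact (le_abs_self _).trans (abs_aEnt_le_entSup A ⟨hus, by linarith [hs.1]⟩ i i)

variable [SFinite (ℙ : Measure Ω)]

theorem memLp_two_uncurry_fouIntegrand (hB : IsMultiFBM H B) (hH : 0 < H) (hu : u ≤ 1)
    (i : Fin d) :
    MemLp (Function.uncurry (fouIntegrand A B u i)) 2 ((volume.restrict (Ioc 0 u)).prod ℙ) := by
  refine memLp_two_uncurry_of_integral_sq_le (measurable_uncurry_fouIntegrand hB i) ?_
    (C := d * entSqSup A * u ^ (2 * H)) ?_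
  · filter_upwards [ae_restrict_mem measurableSet_Ioc] with s hs
    have hs1 : s ∈ Icc (0:ℝ) 1 := ⟨hs.1.le, hs.2.trans hu⟩
    rw [show fouIntegrand A B u i s = _ from funext (fouIntegrand_of_mem hs1 i)]
    exact hB.memLp_two_sum_mul hs1 _
  · filter_upwards [ae_restrict_mem measurableSet_Ioc] with s hs
    exact integral_fouIntegrand_sq_le hB hH hu (Ioc_subset_Icc_self hs) i

theorem memLp_two_setIntegral_fouIntegrand (hB : IsMultiFBM H B) (hH : 0 < H) (hu : u ≤ 1)
    (i : Fin d) : MemLp (fun ω => ∫ s in Ioc 0 u, fouIntegrand A B u i s ω) 2 ℙ :=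
  memLp_two_integral_left (measurable_uncurry_fouIntegrand hB i)
    (memLp_two_uncurry_fouIntegrand hB hH hu i).integrable_sq

theorem integral_sq_setIntegral_fouIntegrand_le (hB : IsMultiFBM H B) (hH : 0 < H)
    (hu : u ∈ Icc (0:ℝ) 1) (i : Fin d) :
    ∫ ω, (∫ s in Ioc 0 u, fouIntegrand A B u i s ω) ^ 2 ≤ d * entSqSup A * u ^ (2 * H) := by
  set C := d * entSqSup A * u ^ (2 * H)
  have hC : 0 ≤ C :=
    mul_nonneg (mul_nonneg d.cast_nonneg (entSqSup_nonneg A)) (rpow_nonneg hu.1 _)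
  have hG2 := (memLp_two_uncurry_fouIntegrand (A := A) hB hH hu.2 i).integrable_sq
  have hbound : ∫ s in Ioc 0 u, ∫ ω, fouIntegrand A B u i s ω ^ 2 ≤ ∫ _ in Ioc (0:ℝ) u, C := by
    refine integral_mono_ae hG2.integral_prod_left (integrable_const C) ?_
    filter_upwards [ae_restrict_mem measurableSet_Ioc] with s hs
    exact integral_fouIntegrand_sq_le hB hH hu.2 (Ioc_subset_Icc_self hs) i
  calc ∫ ω, (∫ s in Ioc 0 u, fouIntegrand A B u i s ω) ^ 2
      ≤ u * ∫ s in Ioc 0 u, ∫ ω, fouIntegrand A B u i s ω ^ 2 := by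
        simpa [hu.1] using integral_sq_integral_le (measurable_uncurry_fouIntegrand hB i) hG2
    _ ≤ u * (u * C) := by
        gcongr
        · exact hu.1
        · simpa [hu.1] using hbound
    _ ≤ C :=
        (mul_le_of_le_one_left (mul_nonneg hu.1 hC) hu.2).trans (mul_le_of_le_one_left hC hu.2)

theorem integral_setIntegral_fouIntegrand_mul_le (hB : IsMultiFBM H B) (hH : 0 < H)
    (hu : u ∈ Icc (0:ℝ) 1) (i : Fin d) :
    ∫ ω, (∫ s in Ioc 0 u, fouIntegrand A B u i s ω) * B u ω i ≤ entSup A * u ^ (2 * H) / 2 := by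
  have hGB : Integrable (fun p : ℝ × Ω => fouIntegrand A B u i p.1 p.2 * B u p.2 i)
      ((volume.restrict (Ioc 0 u)).prod ℙ) :=
    (memLp_two_uncurry_fouIntegrand hB hH hu.2 i).integrable_mul
      ((hB.memLp_two hu i).comp_snd _)
  have hrpow : Continuous fun s : ℝ => s ^ (2 * H) := continuous_rpow_const (by positivity)
  have hcov : Continuous fun s : ℝ => (s ^ (2 * H) + u ^ (2 * H) - (u - s) ^ (2 * H)) / 2 := by
    fun_prop
  rw [integral_integral_mul_swap hGB]
  calc ∫ s in Ioc 0 u, ∫ ω, fouIntegrand A B u i s ω * B u ω i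
      ≤ ∫ s in Ioc 0 u, entSup A * ((s ^ (2 * H) + u ^ (2 * H) - (u - s) ^ (2 * H)) / 2) := by
        refine integral_mono_ae hGB.integral_prod_left (hcov.integrableOn_Ioc.const_mul _) ?_
        filter_upwards [ae_restrict_mem measurableSet_Ioc] with s hs
        exact integral_fouIntegrand_mul_le hB (by positivity) hu.2 (Ioc_subset_Icc_self hs) i
    _ = entSup A * (u * u ^ (2 * H)) / 2 := by
        rw [integral_const_mul, ← intervalIntegral.integral_of_le hu.1,
          integral_rpow_add_rpow_sub_rpow_sub (by linarith)]
        ring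
    _ ≤ entSup A * u ^ (2 * H) / 2 := by
        gcongr ?_ / 2
        exact mul_le_mul_of_nonneg_left (mul_le_of_le_one_left (rpow_nonneg hu.1 _) hu.2)
          (entSup_nonneg A)

theorem memLp_two_fouCentered (hB : IsMultiFBM H B) (hH : 0 < H) (hu : u ∈ Icc (0:ℝ) 1)
    (i : Fin d) : MemLp (fun ω => fouCentered A B u ω i) 2 ℙ := by
  simp_rw [fouCentered_eq_setIntegral_add hu]
  exact (memLp_two_setIntegral_fouIntegrand hB hH hu.2 i).add (hB.memLp_two hu i)

theorem integral_fouCentered_sq_le (hB : IsMultiFBM H B) (hH : 0 < H) (hu : u ∈ Icc (0:ℝ) 1)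
    (i : Fin d) :
    ∫ ω, fouCentered A B u ω i ^ 2 ≤ (d * entSqSup A + entSup A + 1) * u ^ (2 * H) := by
  simp_rw [fouCentered_eq_setIntegral_add hu]
  rw [integral_add_sq (memLp_two_setIntegral_fouIntegrand hB hH hu.2 i) (hB.memLp_two hu i),
    hB.integral_sq hH hu]
  linarith [integral_sq_setIntegral_fouIntegrand_le (A := A) hB hH hu i,
    integral_setIntegral_fouIntegrand_mul_le (A := A) hB hH hu i]

end FOU

theorem fou_multidim_second_moment_upper_general {Ω : Type*} [MeasureSpace Ω]
    [IsProbabilityMeasure (ℙ : Measure Ω)] (d : ℕ) (H : ℝ)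
    (hH : H ∈ Ioo (0:ℝ) 1) (A : Matrix (Fin d) (Fin d) ℝ)
    (B : ℝ → Ω → Fin d → ℝ) (hB : IsMultiFBM H B) :
    ∀ u ∈ Icc (0:ℝ) 1,
      (∫ ω, (∑ i, (fouCentered A B u ω i) ^ 2) ∂(ℙ : Measure Ω)) ≤
        d ^ 2 * entC2 A * u ^ (2 * H) := by
  intro u hu
  rw [integral_finsetSum _ fun i _ => (memLp_two_fouCentered hB hH.1 hu i).integrable_sq]
  have hd : (d : ℝ) ≤ d ^ 2 := by exact_mod_cast Nat.le_self_pow two_ne_zero d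
  have hu2H : 0 ≤ u ^ (2 * H) := rpow_nonneg hu.1 _
  calc ∑ i, ∫ ω, fouCentered A B u ω i ^ 2
      ≤ ∑ _i : Fin d, (d * entSqSup A + entSup A + 1) * u ^ (2 * H) :=
        Finset.sum_le_sum fun i _ => integral_fouCentered_sq_le hB hH.1 hu i
    _ = d * (d * entSqSup A + entSup A + 1) * u ^ (2 * H) := by simp [mul_assoc]
    _ ≤ d ^ 2 * entC2 A * u ^ (2 * H) := by
        rw [entC2_eq]
        refine mul_le_mul_of_nonneg_right ?_ hu2H
        nlinarith [entSup_nonneg A, entSqSup_nonneg A]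

/-- For `d ≥ 1`, `H ∈ (0,1)`, `A ∈ ℝ^(d×d)` and a `d`-dimensional fBM
`B` with Hurst parameter `H`, the centered fOU process `X̃` satisfies
`E[‖X̃_u‖²] ≤ d² C₂ u^(2H)` for every `u ∈ [0,1]` (Euclidean norm). -/
theorem fou_multidim_second_moment_upper {Ω : Type*} [MeasureSpace Ω]
    [IsProbabilityMeasure (ℙ : Measure Ω)] (d : ℕ) (hd : 1 ≤ d) (H : ℝ)
    (hH : H ∈ Ioo (0:ℝ) 1) (A : Matrix (Fin d) (Fin d) ℝ)
    (B : ℝ → Ω → Fin d → ℝ) (hB : IsMultiFBM H B) :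
    ∀ u ∈ Icc (0:ℝ) 1,
      (∫ ω, (∑ i, (fouCentered A B u ω i) ^ 2) ∂(ℙ : Measure Ω)) ≤
        d ^ 2 * entC2 A * u ^ (2 * H) :=
  fou_multidim_second_moment_upper_general d H hH A B hB
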